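/- If a finite mixture density p(x) = Σ_{g=1}^{G} π_g ∏_{j=1}^{d} η_{gj}(x_j) has d ≥ 3, all mixing proportions π_g > 0, and there exist three coordinates j for which the univariate densities {η_{gj} : g = 1,…,G} are linearly independent, then the number of components G, the proportions π_g, and the densities η_{gj} are identifiable up to permutation of the component labels. -/

import Mathlib

open MeasureTheory Finset

set_option linter.unusedSectionVars false
section aux
variable {ι ι' X : Type*} [Fintype ι] [Fintype ι'] {M : Type*} [AddCommGroup M] [Module ℝ M]

/-- If the coefficient functions are linearly independent and a pointwise
combination of module elements vanishes, the elements vanish. -/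
lemma ext_li (f : ι → X → ℝ) (hf : LinearIndependent ℝ f) (m : ι → M)
    (h : ∀ x, ∑ i, f i x • m i = 0) : ∀ i, m i = 0 := by
  intro i
  rw [← Module.forall_dual_apply_eq_zero_iff ℝ]
  intro φ
  have h2 : ∀ x, ∑ j, φ (m j) * f j x = 0 := by
    intro x
    have := congrArg φ (h x)
    simpa [map_sum, mul_comm] using this
  have := Fintype.linearIndependent_iff.1 hf (fun j => φ (m j)) ?_ i
  · exact this
  · funext x
    simpa [Finset.sum_apply, smul_eq_mul] using h2 x

lemma span_incl (f' : ι' → X → ℝ) (hf' : LinearIndependent ℝ f')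
    (m : ι → M) (m' : ι' → M)
    (h : ∀ x, ∑ i, f' i x • m' i ∈ Submodule.span ℝ (Set.range m)) :
    ∀ i', m' i' ∈ Submodule.span ℝ (Set.range m) := by
  set W := Submodule.span ℝ (Set.range m)
  intro i'
  have h0 : ∀ x, ∑ i, f' i x • (W.mkQ (m' i)) = 0 := by
    intro x
    have : W.mkQ (∑ i, f' i x • m' i) = 0 := by
      rw [Submodule.mkQ_apply, Submodule.Quotient.mk_eq_zero]; exact h x
    simpa [map_sum, _root_.map_smul] using this
  have := ext_li f' hf' (fun i => W.mkQ (m' i)) h0 i'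
  rwa [Submodule.mkQ_apply, Submodule.Quotient.mk_eq_zero] at this

end aux

section main
variable {d n : ℕ}

lemma li_prod (η : Fin n → Fin d → ℝ → ℝ) (hne : ∀ g j, ∃ t, η g j t ≠ 0)
    (T : Finset (Fin d)) (a : Fin d) (ha : a ∈ T)
    (hLIa : LinearIndependent ℝ (fun g => η g a))
    (c : Fin n → ℝ) (hc : ∀ g, c g ≠ 0) :
    LinearIndependent ℝ (fun g => fun x : Fin d → ℝ => c g * ∏ j ∈ T, η g j (x j)) := by
  rw [Fintype.linearIndependent_iff]
  intro w hw g₀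
  have hpt : ∀ x : Fin d → ℝ, ∑ g, w g * (c g * ∏ j ∈ T, η g j (x j)) = 0 := by
    intro x
    have := congrFun hw x
    simpa [Finset.sum_apply, smul_eq_mul] using this
  have hsplit : ∀ (x : Fin d → ℝ) (t : ℝ),
      ∑ g, (w g * c g * ∏ j ∈ T.erase a, η g j (x j)) * η g a t = 0 := by
    intro x t
    have := hpt (Function.update x a t)
    rw [← this]
    apply Finset.sum_congr rfl
    intro g _
    rw [← Finset.mul_prod_erase T _ ha]
    have : ∏ j ∈ T.erase a, η g j (Function.update x a t j)
        = ∏ j ∈ T.erase a, η g j (x j) := by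
      apply Finset.prod_congr rfl
      intro j hj
      rw [Function.update_of_ne (Finset.mem_erase.1 hj).1]
    rw [Function.update_self, this]
    ring
  have hz : ∀ x : Fin d → ℝ, w g₀ * c g₀ * ∏ j ∈ T.erase a, η g₀ j (x j) = 0 := by
    intro x
    refine Fintype.linearIndependent_iff.1 hLIa
      (fun g => w g * c g * ∏ j ∈ T.erase a, η g j (x j)) ?_ g₀
    funext t
    simpa [Finset.sum_apply, smul_eq_mul] using hsplit x t
  have := hz (fun j => Classical.choose (hne g₀ j))
  have hprod : ∏ j ∈ T.erase a, η g₀ j (Classical.choose (hne g₀ j)) ≠ 0 :=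
    Finset.prod_ne_zero_iff.2 (fun j _ => Classical.choose_spec (hne g₀ j))
  have := mul_eq_zero.1 this
  rcases this with h | h
  · rcases mul_eq_zero.1 h with h | h
    · exact h
    · exact absurd h (hc g₀)
  · exact absurd h hprod

lemma T3 (f h k : Fin n → ℝ → ℝ)
    (hf : LinearIndependent ℝ f) (hh : LinearIndependent ℝ h) (hk : LinearIndependent ℝ k)
    (D : Fin n → Fin n → Fin n → ℝ)
    (hD : ∀ x y z, ∑ α, ∑ β, ∑ γ, D α β γ * (f α x * h β y * k γ z) = 0) :
    ∀ α β γ, D α β γ = 0 := by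
  intro α β γ
  have h1 : ∀ y z, ∀ α, (∑ β, ∑ γ, D α β γ * (h β y * k γ z)) = 0 := by
    intro y z
    refine Fintype.linearIndependent_iff.1 hf
      (fun α => ∑ β, ∑ γ, D α β γ * (h β y * k γ z)) ?_
    funext x
    simp only [Pi.zero_apply]
    rw [← hD x y z]
    simp only [Finset.sum_apply, Pi.smul_apply, smul_eq_mul, Finset.sum_mul]
    apply Finset.sum_congr rfl; intro a _
    apply Finset.sum_congr rfl; intro b _
    apply Finset.sum_congr rfl; intro c _
    ring
  have h2 : ∀ z, ∀ β, (∑ γ, D α β γ * k γ z) = 0 := by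
    intro z
    refine Fintype.linearIndependent_iff.1 hh
      (fun β => ∑ γ, D α β γ * k γ z) ?_
    funext y
    simp only [Pi.zero_apply]
    rw [← h1 y z α]
    simp only [Finset.sum_apply, Pi.smul_apply, smul_eq_mul, Finset.sum_mul]
    apply Finset.sum_congr rfl; intro b _
    apply Finset.sum_congr rfl; intro c _
    ring
  refine Fintype.linearIndependent_iff.1 hk (fun γ => D α β γ) ?_ γ
  funext z
  simpa [Finset.sum_apply, smul_eq_mul, mul_comm] using h2 z β

end main

lemma marg_step {d G G' : ℕ} (π : Fin G → ℝ) (π' : Fin G' → ℝ)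
    (η : Fin G → Fin d → ℝ → ℝ) (η' : Fin G' → Fin d → ℝ → ℝ)
    (hint : ∀ g j, Integrable (η g j)) (hint' : ∀ g j, Integrable (η' g j))
    (hI : ∀ g j, ∫ t, η g j t = 1) (hI' : ∀ g j, ∫ t, η' g j t = 1)
    (S : Finset (Fin d)) (j₀ : Fin d)
    (hP : ∀ x : Fin d → ℝ, ∑ g, π g * ∏ j ∈ S, η g j (x j)
      = ∑ g', π' g' * ∏ j ∈ S, η' g' j (x j)) :
    ∀ x : Fin d → ℝ, ∑ g, π g * ∏ j ∈ S.erase j₀, η g j (x j)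
      = ∑ g', π' g' * ∏ j ∈ S.erase j₀, η' g' j (x j) := by
  by_cases hj : j₀ ∈ S
  · intro x
    have key : ∀ t : ℝ, ∑ g, (π g * ∏ j ∈ S.erase j₀, η g j (x j)) * η g j₀ t
        = ∑ g', (π' g' * ∏ j ∈ S.erase j₀, η' g' j (x j)) * η' g' j₀ t := by
      intro t
      have split : ∀ {m : ℕ} (θ : Fin m → Fin d → ℝ → ℝ) (g : Fin m),
          ∏ j ∈ S, θ g j (Function.update x j₀ t j)
          = (∏ j ∈ S.erase j₀, θ g j (x j)) * θ g j₀ t := by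
        intro m θ g
        rw [← Finset.mul_prod_erase S _ hj, Function.update_self]
        rw [Finset.prod_congr rfl (fun j hjj => by
          rw [Function.update_of_ne (Finset.mem_erase.1 hjj).1])]
        ring
      have := hP (Function.update x j₀ t)
      calc ∑ g, (π g * ∏ j ∈ S.erase j₀, η g j (x j)) * η g j₀ t
          = ∑ g, π g * ∏ j ∈ S, η g j (Function.update x j₀ t j) := by
            refine Finset.sum_congr rfl (fun g _ => ?_); rw [split η g]; ring
        _ = ∑ g', π' g' * ∏ j ∈ S, η' g' j (Function.update x j₀ t j) := this
        _ = ∑ g', (π' g' * ∏ j ∈ S.erase j₀, η' g' j (x j)) * η' g' j₀ t := by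
            refine Finset.sum_congr rfl (fun g _ => ?_); rw [split η' g]; ring
    have int_side : ∀ {m : ℕ} (p : Fin m → ℝ) (θ : Fin m → Fin d → ℝ → ℝ)
        (hi : ∀ g j, Integrable (θ g j)) (hI1 : ∀ g j, ∫ t, θ g j t = 1),
        ∫ t, ∑ g, (p g * ∏ j ∈ S.erase j₀, θ g j (x j)) * θ g j₀ t
          = ∑ g, p g * ∏ j ∈ S.erase j₀, θ g j (x j) := by
      intro m p θ hi hI1
      rw [integral_finset_sum _ (fun g _ => ((hi g j₀).const_mul _))]
      refine Finset.sum_congr rfl (fun g _ => ?_)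
      rw [MeasureTheory.integral_const_mul, hI1 g j₀, mul_one]
    calc ∑ g, π g * ∏ j ∈ S.erase j₀, η g j (x j)
        = ∫ t, ∑ g, (π g * ∏ j ∈ S.erase j₀, η g j (x j)) * η g j₀ t :=
          (int_side π η hint hI).symm
      _ = ∫ t, ∑ g', (π' g' * ∏ j ∈ S.erase j₀, η' g' j (x j)) * η' g' j₀ t := by
          refine integral_congr_ae (Filter.Eventually.of_forall (fun t => key t))
      _ = ∑ g', π' g' * ∏ j ∈ S.erase j₀, η' g' j (x j) := int_side π' η' hint' hI'
  · rw [Finset.erase_eq_of_notMem hj]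
    exact hP

lemma marg {d G G' : ℕ} (π : Fin G → ℝ) (π' : Fin G' → ℝ)
    (η : Fin G → Fin d → ℝ → ℝ) (η' : Fin G' → Fin d → ℝ → ℝ)
    (hint : ∀ g j, Integrable (η g j)) (hint' : ∀ g j, Integrable (η' g j))
    (hI : ∀ g j, ∫ t, η g j t = 1) (hI' : ∀ g j, ∫ t, η' g j t = 1)
    (heq : ∀ x : Fin d → ℝ,
      ∑ g, π g * ∏ j, η g j (x j) = ∑ g', π' g' * ∏ j, η' g' j (x j)) :
    ∀ (T : Finset (Fin d)) (x : Fin d → ℝ),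
      ∑ g, π g * ∏ j ∈ T, η g j (x j) = ∑ g', π' g' * ∏ j ∈ T, η' g' j (x j) := by
  have main : ∀ C : Finset (Fin d), ∀ x : Fin d → ℝ,
      ∑ g, π g * ∏ j ∈ Finset.univ \ C, η g j (x j)
        = ∑ g', π' g' * ∏ j ∈ Finset.univ \ C, η' g' j (x j) := by
    intro C
    induction C using Finset.induction_on with
    | empty => simpa using heq
    | insert _ _ hnm ih =>
        rw [Finset.sdiff_insert]
        exact marg_step π π' η η' hint hint' hI hI' _ _ ih
  intro T x
  have := main (Finset.univ \ T) x
  rwa [Finset.sdiff_sdiff_self_left, Finset.univ_inter] at this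

-- split evaluation helper
lemma split_marg {d G G' : ℕ} (π : Fin G → ℝ) (π' : Fin G' → ℝ)
    (η : Fin G → Fin d → ℝ → ℝ) (η' : Fin G' → Fin d → ℝ → ℝ)
    (hm : ∀ (T : Finset (Fin d)) (x : Fin d → ℝ),
      ∑ g, π g * ∏ j ∈ T, η g j (x j) = ∑ g', π' g' * ∏ j ∈ T, η' g' j (x j))
    (S : Finset (Fin d)) (s : Fin d) (hs : s ∈ S) (t : ℝ) (x : Fin d → ℝ) :
    ∑ g, (π g * ∏ j ∈ S.erase s, η g j (x j)) * η g s t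
      = ∑ g', (π' g' * ∏ j ∈ S.erase s, η' g' j (x j)) * η' g' s t := by
  have split : ∀ {m : ℕ} (θ : Fin m → Fin d → ℝ → ℝ) (g : Fin m),
      ∏ j ∈ S, θ g j (Function.update x s t j)
      = (∏ j ∈ S.erase s, θ g j (x j)) * θ g s t := by
    intro m θ g
    rw [← Finset.mul_prod_erase S _ hs, Function.update_self]
    rw [Finset.prod_congr rfl (fun j hjj => by
      rw [Function.update_of_ne (Finset.mem_erase.1 hjj).1])]
    ring
  have := hm S (Function.update x s t)
  calc ∑ g, (π g * ∏ j ∈ S.erase s, η g j (x j)) * η g s t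
      = ∑ g, π g * ∏ j ∈ S, η g j (Function.update x s t j) := by
        refine Finset.sum_congr rfl (fun g _ => ?_); rw [split η g]; ring
    _ = ∑ g', π' g' * ∏ j ∈ S, η' g' j (Function.update x s t j) := this
    _ = ∑ g', (π' g' * ∏ j ∈ S.erase s, η' g' j (x j)) * η' g' s t := by
        refine Finset.sum_congr rfl (fun g _ => ?_); rw [split η' g]; ring

lemma card_le {d G G' : ℕ} (π : Fin G → ℝ) (π' : Fin G' → ℝ)
    (η : Fin G → Fin d → ℝ → ℝ) (η' : Fin G' → Fin d → ℝ → ℝ)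
    (hπ'ne : ∀ g', π' g' ≠ 0)
    (hne' : ∀ g' j, ∃ t, η' g' j t ≠ 0)
    (J' : Finset (Fin d)) (hJ'3 : J'.card = 3)
    (hJ'LI : ∀ j ∈ J', LinearIndependent ℝ (fun g' : Fin G' => η' g' j))
    (hm : ∀ (T : Finset (Fin d)) (x : Fin d → ℝ),
      ∑ g, π g * ∏ j ∈ T, η g j (x j) = ∑ g', π' g' * ∏ j ∈ T, η' g' j (x j)) :
    G' ≤ G := by
  obtain ⟨a', ha'⟩ : ∃ a', a' ∈ J' := Finset.card_pos.1 (by omega) |>.imp (fun _ h => h)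
  obtain ⟨b', hb'J, hb'ne⟩ := Finset.exists_mem_ne (by omega : 1 < J'.card) a'
  set T' := J'.erase a' with hT'
  have hb'T : b' ∈ T' := Finset.mem_erase.2 ⟨hb'ne, hb'J⟩
  set m : Fin G → ((Fin d → ℝ) → ℝ) := fun g x => ∏ j ∈ T', η g j (x j) with hmdef
  set m' : Fin G' → ((Fin d → ℝ) → ℝ) := fun g' x => ∏ j ∈ T', η' g' j (x j) with hm'def
  -- coefficient functions on primed side are LI
  have hf'LI : LinearIndependent ℝ (fun g' : Fin G' => fun t : ℝ => π' g' * η' g' a' t) := by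
    rw [Fintype.linearIndependent_iff]
    intro w hw g'
    have := Fintype.linearIndependent_iff.1 (hJ'LI a' ha') (fun g' => w g' * π' g') ?_ g'
    · rcases mul_eq_zero.1 this with h | h
      · exact h
      · exact absurd h (hπ'ne g')
    · funext t
      have := congrFun hw t
      simpa [Finset.sum_apply, smul_eq_mul, mul_assoc] using this
  -- membership
  have hmem : ∀ g', m' g' ∈ Submodule.span ℝ (Set.range m) := by
    refine span_incl _ hf'LI m m' ?_
    intro t
    have hkey := split_marg π π' η η' hm J' a' ha' t
    have : (∑ g', (fun u : ℝ => π' g' * η' g' a' u) t • m' g')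
        = ∑ g, (π g * η g a' t) • m g := by
      funext x
      simp only [Finset.sum_apply, Pi.smul_apply, smul_eq_mul, hmdef, hm'def]
      have := hkey x
      rw [← hT'] at this
      calc ∑ g', π' g' * η' g' a' t * ∏ j ∈ T', η' g' j (x j)
          = ∑ g', (π' g' * ∏ j ∈ T', η' g' j (x j)) * η' g' a' t := by
            refine Finset.sum_congr rfl (fun g'' _ => by ring)
        _ = ∑ g, (π g * ∏ j ∈ T', η g j (x j)) * η g a' t := this.symm
        _ = ∑ g, π g * η g a' t * ∏ j ∈ T', η g j (x j) := by
            refine Finset.sum_congr rfl (fun g _ => by ring)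
    rw [this]
    exact Submodule.sum_mem _ (fun g _ => Submodule.smul_mem _ _
      (Submodule.subset_span (Set.mem_range_self g)))
  -- m' is linearly independent
  have hm'LI : LinearIndependent ℝ m' := by
    have := li_prod η' hne' T' b' hb'T (hJ'LI b' hb'J) (fun _ => (1:ℝ)) (fun _ => one_ne_zero)
    simpa [hm'def] using this
  -- card comparison
  have : FiniteDimensional ℝ (Submodule.span ℝ (Set.range m)) :=
    FiniteDimensional.span_of_finite ℝ (Set.finite_range m)
  set v' : Fin G' → (Submodule.span ℝ (Set.range m)) := fun g' => ⟨m' g', hmem g'⟩ with hv'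
  have hv'LI : LinearIndependent ℝ v' := by
    apply LinearIndependent.of_comp (Submodule.span ℝ (Set.range m)).subtype
    convert hm'LI
    rfl
  have h1 : Fintype.card (Fin G') ≤ Module.finrank ℝ (Submodule.span ℝ (Set.range m)) :=
    hv'LI.fintype_card_le_finrank
  have h2 : Module.finrank ℝ (Submodule.span ℝ (Set.range m)) ≤ Fintype.card (Fin G) :=
    finrank_range_le_card m
  simpa using h1.trans h2

lemma coord_matrix {n : ℕ} (u u' : Fin n → ℝ → ℝ) (hu : LinearIndependent ℝ u)
    (h1 : ∀ g', u' g' ∈ Submodule.span ℝ (Set.range u))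
    (h2 : ∀ g, u g ∈ Submodule.span ℝ (Set.range u')) :
    ∃ P : Fin n → Fin n → ℝ, (∀ g' t, u' g' t = ∑ α, P α g' * u α t) ∧
      (∀ v : Fin n → ℝ, (∀ γ, ∑ g', P γ g' * v g' = 0) → ∀ g', v g' = 0) := by
  classical
  have hP : ∀ g', ∃ cvec : Fin n → ℝ, ∑ α, cvec α • u α = u' g' :=
    fun g' => (Submodule.mem_span_range_iff_exists_fun ℝ).1 (h1 g')
  have hPt : ∀ g, ∃ cvec : Fin n → ℝ, ∑ g', cvec g' • u' g' = u g :=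
    fun g => (Submodule.mem_span_range_iff_exists_fun ℝ).1 (h2 g)
  set P : Fin n → Fin n → ℝ := fun α g' => Classical.choose (hP g') α with hPdef
  set Pt : Fin n → Fin n → ℝ := fun g' g => Classical.choose (hPt g) g' with hPtdef
  have hPspec : ∀ g' t, u' g' t = ∑ α, P α g' * u α t := by
    intro g' t
    have := congrFun (Classical.choose_spec (hP g')) t
    simpa [Finset.sum_apply, smul_eq_mul] using this.symm
  have hPtspec : ∀ g t, u g t = ∑ g', Pt g' g * u' g' t := by
    intro g t
    have := congrFun (Classical.choose_spec (hPt g)) t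
    simpa [Finset.sum_apply, smul_eq_mul] using this.symm
  refine ⟨P, hPspec, ?_⟩
  -- matrix identities
  set A : Matrix (Fin n) (Fin n) ℝ := Matrix.of P with hA
  set B : Matrix (Fin n) (Fin n) ℝ := Matrix.of Pt with hB
  have hAB : A * B = 1 := by
    ext α g
    rw [Matrix.mul_apply, Matrix.one_apply]
    have key : ∀ t, ∑ β, ((∑ g', P β g' * Pt g' g) - (if β = g then 1 else 0)) * u β t = 0 := by
      intro t
      have e1 : u g t = ∑ β, (∑ g', P β g' * Pt g' g) * u β t := by
        calc u g t = ∑ g', Pt g' g * u' g' t := hPtspec g t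
          _ = ∑ g', Pt g' g * ∑ β, P β g' * u β t := by
              refine Finset.sum_congr rfl (fun g' _ => by rw [← hPspec g' t])
          _ = ∑ g', ∑ β, Pt g' g * (P β g' * u β t) := by
              refine Finset.sum_congr rfl (fun g' _ => by rw [Finset.mul_sum])
          _ = ∑ β, ∑ g', Pt g' g * (P β g' * u β t) := Finset.sum_comm
          _ = ∑ β, (∑ g', P β g' * Pt g' g) * u β t := by
              refine Finset.sum_congr rfl (fun β _ => ?_)
              rw [Finset.sum_mul]
              refine Finset.sum_congr rfl (fun g' _ => by ring)
      have e2 : u g t = ∑ β, (if β = g then (1:ℝ) else 0) * u β t := by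
        simp [ite_mul]
      rw [Finset.sum_congr rfl (fun β _ => sub_mul (∑ g', P β g' * Pt g' g)
        (if β = g then (1:ℝ) else 0) (u β t)), Finset.sum_sub_distrib]
      rw [← e1, ← e2]
      ring
    have hco := Fintype.linearIndependent_iff.1 hu
      (fun β => (∑ g', P β g' * Pt g' g) - (if β = g then 1 else 0)) ?_ α
    · have := sub_eq_zero.1 hco
      simpa [hA, hB, Matrix.of_apply] using this
    · funext t
      simpa [Finset.sum_apply, smul_eq_mul] using key t
  have hBA : B * A = 1 := mul_eq_one_comm.1 hAB
  -- column injectivity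
  intro v hv g₀'
  have : ∀ g₂', (∑ g, (B * A) g₂' g * v g) = v g₂' := by
    intro g₂'
    rw [hBA]
    simp [Matrix.one_apply, Finset.sum_ite_eq]
  rw [← this g₀']
  calc ∑ g, (B * A) g₀' g * v g
      = ∑ g, (∑ γ, Pt g₀' γ * P γ g) * v g := by
        refine Finset.sum_congr rfl (fun g _ => ?_)
        rw [Matrix.mul_apply]
        rfl
    _ = ∑ g, ∑ γ, Pt g₀' γ * (P γ g * v g) := by
        refine Finset.sum_congr rfl (fun g _ => ?_)
        rw [Finset.sum_mul]
        refine Finset.sum_congr rfl (fun γ _ => by ring)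
    _ = ∑ γ, ∑ g, Pt g₀' γ * (P γ g * v g) := Finset.sum_comm
    _ = ∑ γ, Pt g₀' γ * (∑ g, P γ g * v g) := by
        refine Finset.sum_congr rfl (fun γ _ => (Finset.mul_sum _ _ _).symm)
    _ = 0 := by
        refine Finset.sum_eq_zero (fun γ _ => ?_)
        rw [hv γ, mul_zero]

lemma span_coord {d G G' : ℕ} (π : Fin G → ℝ) (π' : Fin G' → ℝ)
    (η : Fin G → Fin d → ℝ → ℝ) (η' : Fin G' → Fin d → ℝ → ℝ)
    (hπ'ne : ∀ g', π' g' ≠ 0)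
    (hne' : ∀ g' j, ∃ t, η' g' j t ≠ 0)
    (J' : Finset (Fin d)) (hJ'3 : J'.card = 3)
    (hJ'LI : ∀ j ∈ J', LinearIndependent ℝ (fun g' : Fin G' => η' g' j))
    (hm : ∀ (T : Finset (Fin d)) (x : Fin d → ℝ),
      ∑ g, π g * ∏ j ∈ T, η g j (x j) = ∑ g', π' g' * ∏ j ∈ T, η' g' j (x j))
    (s : Fin d) :
    ∀ g', η' g' s ∈ Submodule.span ℝ (Set.range (fun g => η g s)) := by
  classical
  set S : Finset (Fin d) := insert s J' with hS
  have hsS : s ∈ S := Finset.mem_insert_self s J'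
  obtain ⟨e, heJ, hene⟩ := Finset.exists_mem_ne (by omega : 1 < J'.card) s
  have heS : e ∈ S.erase s := Finset.mem_erase.2 ⟨hene, Finset.mem_insert_of_mem heJ⟩
  have hf'LI : LinearIndependent ℝ
      (fun g' : Fin G' => fun w : Fin d → ℝ => π' g' * ∏ j ∈ S.erase s, η' g' j (w j)) :=
    li_prod η' hne' (S.erase s) e heS (hJ'LI e heJ) π' hπ'ne
  refine span_incl _ hf'LI (fun g => η g s) (fun g' => η' g' s) ?_
  intro w
  have : (∑ g', (fun w : Fin d → ℝ => π' g' * ∏ j ∈ S.erase s, η' g' j (w j)) w • η' g' s)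
      = ∑ g, (π g * ∏ j ∈ S.erase s, η g j (w j)) • η g s := by
    funext t
    simp only [Finset.sum_apply, Pi.smul_apply, smul_eq_mul]
    exact (split_marg π π' η η' hm S s hsS t w).symm
  rw [this]
  exact Submodule.sum_mem _ (fun g _ => Submodule.smul_mem _ _
    (Submodule.subset_span (Set.mem_range_self g)))


/-- Identifiability of a finite mixture with class-conditional independence:
if two such representations (each with at least 3 coordinates, positive mixing
proportions, and three coordinates on which the component densities are linearly
independent) define the same density, then they coincide up to a permutation
of the component labels. -/
theorem latent_class_identifiability
    (d : ℕ) (hd : 3 ≤ d)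
    (G G' : ℕ)
    (π : Fin G → ℝ) (π' : Fin G' → ℝ)
    (η : Fin G → Fin d → ℝ → ℝ) (η' : Fin G' → Fin d → ℝ → ℝ)
    (hπpos : ∀ g, 0 < π g) (hπ'pos : ∀ g, 0 < π' g)
    (hπsum : ∑ g, π g = 1) (hπ'sum : ∑ g, π' g = 1)
    (hdens : ∀ g j, (∀ x, 0 ≤ η g j x) ∧ ∫ x, η g j x = 1)
    (hdens' : ∀ g j, (∀ x, 0 ≤ η' g j x) ∧ ∫ x, η' g j x = 1)
    (hLI : ∃ J : Finset (Fin d), J.card = 3 ∧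
      ∀ j ∈ J, LinearIndependent ℝ (fun g : Fin G => η g j))
    (hLI' : ∃ J : Finset (Fin d), J.card = 3 ∧
      ∀ j ∈ J, LinearIndependent ℝ (fun g : Fin G' => η' g j))
    (heq : ∀ x : Fin d → ℝ,
      ∑ g, π g * ∏ j, η g j (x j) = ∑ g, π' g * ∏ j, η' g j (x j)) :
    G = G' ∧ ∃ σ : Fin G ≃ Fin G',
      (∀ g, π' (σ g) = π g) ∧ ∀ g j, η' (σ g) j = η g j := by
  classical
  obtain ⟨J, hJ3, hJLI⟩ := hLI
  obtain ⟨J', hJ'3, hJ'LI⟩ := hLI'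
  have hI : ∀ g j, ∫ t, η g j t = 1 := fun g j => (hdens g j).2
  have hI' : ∀ g j, ∫ t, η' g j t = 1 := fun g j => (hdens' g j).2
  have hint : ∀ g j, MeasureTheory.Integrable (η g j) := by
    intro g j
    by_contra h
    have h0 := MeasureTheory.integral_undef h
    rw [hI g j] at h0
    norm_num at h0
  have hint' : ∀ g j, MeasureTheory.Integrable (η' g j) := by
    intro g j
    by_contra h
    have h0 := MeasureTheory.integral_undef h
    rw [hI' g j] at h0
    norm_num at h0
  have hne : ∀ g j, ∃ t, η g j t ≠ 0 := by
    intro g j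
    by_contra h
    push_neg at h
    have h0 : η g j = fun _ => 0 := funext h
    have h1 := hI g j
    rw [h0] at h1
    simp at h1
  have hne' : ∀ g j, ∃ t, η' g j t ≠ 0 := by
    intro g j
    by_contra h
    push_neg at h
    have h0 : η' g j = fun _ => 0 := funext h
    have h1 := hI' g j
    rw [h0] at h1
    simp at h1
  have hπne : ∀ g, π g ≠ 0 := fun g => ne_of_gt (hπpos g)
  have hπ'ne : ∀ g, π' g ≠ 0 := fun g => ne_of_gt (hπ'pos g)
  have hm := marg π π' η η' hint hint' hI hI' heq
  have hmrev : ∀ (T : Finset (Fin d)) (x : Fin d → ℝ),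
      ∑ g', π' g' * ∏ j ∈ T, η' g' j (x j) = ∑ g, π g * ∏ j ∈ T, η g j (x j) :=
    fun T x => (hm T x).symm
  have hG1 : G' ≤ G := card_le π π' η η' hπ'ne hne' J' hJ'3 hJ'LI hm
  have hG2 : G ≤ G' := card_le π' π η' η hπne hne J hJ3 hJLI hmrev
  have hGG : G = G' := le_antisymm hG2 hG1
  subst hGG
  refine ⟨rfl, ?_⟩
  -- pick the three coordinates for the unprimed family
  obtain ⟨a, b, c, hab, hac, hbc, hJabc⟩ := Finset.card_eq_three.1 hJ3
  have haJ : a ∈ J := by rw [hJabc]; simp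
  have hbJ : b ∈ J := by rw [hJabc]; simp
  have hcJ : c ∈ J := by rw [hJabc]; simp
  have hLIa := hJLI a haJ
  have hLIb := hJLI b hbJ
  have hLIc := hJLI c hcJ
  have spanP : ∀ s g', η' g' s ∈ Submodule.span ℝ (Set.range (fun g => η g s)) :=
    fun s => span_coord π π' η η' hπ'ne hne' J' hJ'3 hJ'LI hm s
  have spanPt : ∀ s g, η g s ∈ Submodule.span ℝ (Set.range (fun g' => η' g' s)) :=
    fun s => span_coord π' π η' η hπne hne J hJ3 hJLI hmrev s
  obtain ⟨Pa, hPa, hPainj⟩ :=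
    coord_matrix (fun g => η g a) (fun g' => η' g' a) hLIa (spanP a) (spanPt a)
  obtain ⟨Pb, hPb, hPbinj⟩ :=
    coord_matrix (fun g => η g b) (fun g' => η' g' b) hLIb (spanP b) (spanPt b)
  obtain ⟨Pc, hPc, hPcinj⟩ :=
    coord_matrix (fun g => η g c) (fun g' => η' g' c) hLIc (spanP c) (spanPt c)
  -- explicit triple identity
  set ξ : ℝ → ℝ → ℝ → (Fin d → ℝ) := fun x y z =>
    Function.update (Function.update (Function.update (fun _ => (0:ℝ)) a x) b y) c z with hξ
  have hξa : ∀ x y z, ξ x y z a = x := by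
    intro x y z
    simp [hξ, Function.update_of_ne hac, Function.update_of_ne hab]
  have hξb : ∀ x y z, ξ x y z b = y := by
    intro x y z
    simp [hξ, Function.update_of_ne hbc]
  have hξc : ∀ x y z, ξ x y z c = z := by
    intro x y z
    simp [hξ]
  have prodJ : ∀ {m : ℕ} (θ : Fin m → Fin d → ℝ → ℝ) (g : Fin m) (w : Fin d → ℝ),
      ∏ j ∈ J, θ g j (w j) = θ g a (w a) * θ g b (w b) * θ g c (w c) := by
    intro m θ g w
    rw [hJabc]
    rw [Finset.prod_insert (by simp [hab, hac]), Finset.prod_insert (by simp [hbc]),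
      Finset.prod_singleton]
    ring
  have H3 : ∀ x y z, ∑ g, π g * (η g a x * η g b y * η g c z)
      = ∑ g', π' g' * (η' g' a x * η' g' b y * η' g' c z) := by
    intro x y z
    calc ∑ g, π g * (η g a x * η g b y * η g c z)
        = ∑ g, π g * ∏ j ∈ J, η g j (ξ x y z j) := by
          refine Finset.sum_congr rfl (fun g _ => by rw [prodJ η g, hξa, hξb, hξc])
      _ = ∑ g', π' g' * ∏ j ∈ J, η' g' j (ξ x y z j) := hm J (ξ x y z)
      _ = ∑ g', π' g' * (η' g' a x * η' g' b y * η' g' c z) := by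
          refine Finset.sum_congr rfl (fun g' _ => by rw [prodJ η' g', hξa, hξb, hξc])
  -- coefficient matching helper
  have li_match : ∀ (f : Fin G → ℝ → ℝ), LinearIndependent ℝ f → ∀ (cL cR : Fin G → ℝ),
      (∀ x, ∑ i, cL i * f i x = ∑ i, cR i * f i x) → ∀ i, cL i = cR i := by
    intro f hf cL cR h i
    have := Fintype.linearIndependent_iff.1 hf (fun i => cL i - cR i) ?_ i
    · linarith [this]
    · funext x
      simp only [Finset.sum_apply, Pi.smul_apply, smul_eq_mul, sub_mul,
        Finset.sum_sub_distrib, Pi.zero_apply]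
      rw [h x, sub_self]
  -- step 1: extract coefficient of η · a
  have E1 : ∀ (α : Fin G) (y z : ℝ), π α * (η α b y * η α c z)
      = ∑ g', π' g' * Pa α g' * (η' g' b y * η' g' c z) := by
    intro α y z
    refine li_match (fun g => η g a) hLIa
      (fun α => π α * (η α b y * η α c z))
      (fun α => ∑ g', π' g' * Pa α g' * (η' g' b y * η' g' c z)) (fun x => ?_) α
    calc ∑ i, π i * (η i b y * η i c z) * η i a x
        = ∑ g, π g * (η g a x * η g b y * η g c z) := by
          refine Finset.sum_congr rfl (fun g _ => by ring)
      _ = ∑ g', π' g' * (η' g' a x * η' g' b y * η' g' c z) := H3 x y z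
      _ = ∑ g', ∑ α, π' g' * Pa α g' * (η' g' b y * η' g' c z) * η α a x := by
          refine Finset.sum_congr rfl (fun g' _ => ?_)
          rw [hPa g' x]
          calc π' g' * ((∑ α, Pa α g' * η α a x) * η' g' b y * η' g' c z)
              = (∑ α, Pa α g' * η α a x) * (π' g' * (η' g' b y * η' g' c z)) := by ring
            _ = ∑ α, (Pa α g' * η α a x) * (π' g' * (η' g' b y * η' g' c z)) :=
                Finset.sum_mul _ _ _
            _ = ∑ α, π' g' * Pa α g' * (η' g' b y * η' g' c z) * η α a x :=
                Finset.sum_congr rfl (fun α _ => by ring)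
      _ = ∑ α, ∑ g', π' g' * Pa α g' * (η' g' b y * η' g' c z) * η α a x := Finset.sum_comm
      _ = ∑ i, (∑ g', π' g' * Pa i g' * (η' g' b y * η' g' c z)) * η i a x := by
          refine Finset.sum_congr rfl (fun α _ => by rw [Finset.sum_mul])
  -- step 2: extract coefficient of η · b
  have E2 : ∀ (α β : Fin G) (z : ℝ), (if β = α then π α * η α c z else 0)
      = ∑ g', π' g' * Pa α g' * Pb β g' * η' g' c z := by
    intro α β z
    refine li_match (fun g => η g b) hLIb
      (fun β => if β = α then π α * η α c z else 0)
      (fun β => ∑ g', π' g' * Pa α g' * Pb β g' * η' g' c z) (fun y => ?_) β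
    calc ∑ i, (if i = α then π α * η α c z else 0) * η i b y
        = π α * (η α b y * η α c z) := by
          simp [ite_mul]
          ring
      _ = ∑ g', π' g' * Pa α g' * (η' g' b y * η' g' c z) := E1 α y z
      _ = ∑ g', ∑ β, π' g' * Pa α g' * Pb β g' * η' g' c z * η β b y := by
          refine Finset.sum_congr rfl (fun g' _ => ?_)
          rw [hPb g' y]
          calc π' g' * Pa α g' * ((∑ β, Pb β g' * η β b y) * η' g' c z)
              = (∑ β, Pb β g' * η β b y) * (π' g' * Pa α g' * η' g' c z) := by ring
            _ = ∑ β, (Pb β g' * η β b y) * (π' g' * Pa α g' * η' g' c z) :=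
                Finset.sum_mul _ _ _
            _ = ∑ β, π' g' * Pa α g' * Pb β g' * η' g' c z * η β b y :=
                Finset.sum_congr rfl (fun β _ => by ring)
      _ = ∑ β, ∑ g', π' g' * Pa α g' * Pb β g' * η' g' c z * η β b y := Finset.sum_comm
      _ = ∑ i, (∑ g', π' g' * Pa α g' * Pb i g' * η' g' c z) * η i b y := by
          refine Finset.sum_congr rfl (fun β _ => by rw [Finset.sum_mul])
  -- step 3: extract coefficient of η · c
  have key : ∀ (α β γ : Fin G), ∑ g', π' g' * Pa α g' * Pb β g' * Pc γ g'
      = if β = α then (if γ = α then π α else 0) else 0 := by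
    intro α β γ
    refine (li_match (fun g => η g c) hLIc
      (fun γ => ∑ g', π' g' * Pa α g' * Pb β g' * Pc γ g')
      (fun γ => if β = α then (if γ = α then π α else 0) else 0) (fun z => ?_) γ)
    calc ∑ i, (∑ g', π' g' * Pa α g' * Pb β g' * Pc i g') * η i c z
        = ∑ i, ∑ g', π' g' * Pa α g' * Pb β g' * Pc i g' * η i c z := by
          refine Finset.sum_congr rfl (fun i _ => by rw [Finset.sum_mul])
      _ = ∑ g', ∑ i, π' g' * Pa α g' * Pb β g' * Pc i g' * η i c z := Finset.sum_comm
      _ = ∑ g', π' g' * Pa α g' * Pb β g' * η' g' c z := by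
          refine Finset.sum_congr rfl (fun g' _ => ?_)
          rw [hPc g' z]
          calc ∑ i, π' g' * Pa α g' * Pb β g' * Pc i g' * η i c z
              = ∑ i, (Pc i g' * η i c z) * (π' g' * Pa α g' * Pb β g') :=
                Finset.sum_congr rfl (fun i _ => by ring)
            _ = (∑ i, Pc i g' * η i c z) * (π' g' * Pa α g' * Pb β g') :=
                (Finset.sum_mul _ _ _).symm
            _ = π' g' * Pa α g' * Pb β g' * (∑ i, Pc i g' * η i c z) := by ring
      _ = if β = α then π α * η α c z else 0 := (E2 α β z).symm
      _ = ∑ i, (if β = α then (if i = α then π α else 0) else 0) * η i c z := by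
          by_cases hba : β = α
          · simp [hba, ite_mul]
          · simp [hba]
  -- columns are nonzero
  have colPa_ne : ∀ g', ∃ α, Pa α g' ≠ 0 := by
    intro g'
    by_contra h
    push_neg at h
    have := hPainj (fun g₂' => if g₂' = g' then 1 else 0) (fun γ => by
      simp [mul_ite, Finset.sum_ite_eq', h γ]) g'
    simp at this
  have colPb_ne : ∀ g', ∃ β, Pb β g' ≠ 0 := by
    intro g'
    by_contra h
    push_neg at h
    have := hPbinj (fun g₂' => if g₂' = g' then 1 else 0) (fun γ => by
      simp [mul_ite, Finset.sum_ite_eq', h γ]) g'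
    simp at this
  -- off-diagonal products vanish
  have M1ab : ∀ α β, β ≠ α → ∀ g', Pa α g' * Pb β g' = 0 := by
    intro α β hba g'
    have h0 : ∀ γ, ∑ g₂', Pc γ g₂' * (π' g₂' * (Pa α g₂' * Pb β g₂')) = 0 := by
      intro γ
      have hk := key α β γ
      rw [if_neg hba] at hk
      rw [← hk]
      refine Finset.sum_congr rfl (fun g₂' _ => by ring)
    have := hPcinj _ h0 g'
    rcases mul_eq_zero.1 this with h | h
    · exact absurd h (hπ'ne g')
    · exact h
  have M1ac : ∀ α γ, γ ≠ α → ∀ g', Pa α g' * Pc γ g' = 0 := by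
    intro α γ hga g'
    have h0 : ∀ β, ∑ g₂', Pb β g₂' * (π' g₂' * (Pa α g₂' * Pc γ g₂')) = 0 := by
      intro β
      have hk := key α β γ
      rw [if_neg hga] at hk
      have hk2 : ∑ g₂', π' g₂' * Pa α g₂' * Pb β g₂' * Pc γ g₂' = 0 := by
        rw [hk]; simp
      rw [← hk2]
      refine Finset.sum_congr rfl (fun g₂' _ => by ring)
    have := hPbinj _ h0 g'
    rcases mul_eq_zero.1 this with h | h
    · exact absurd h (hπ'ne g')
    · exact h
  -- permutation
  set τ : Fin G → Fin G := fun g' => (colPa_ne g').choose with hτdef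
  have hτ : ∀ g', Pa (τ g') g' ≠ 0 := fun g' => (colPa_ne g').choose_spec
  have hQsupp : ∀ g' β, β ≠ τ g' → Pb β g' = 0 := by
    intro g' β h
    rcases mul_eq_zero.1 (M1ab (τ g') β h g') with h1 | h1
    · exact absurd h1 (hτ g')
    · exact h1
  have hRsupp : ∀ g' γ, γ ≠ τ g' → Pc γ g' = 0 := by
    intro g' γ h
    rcases mul_eq_zero.1 (M1ac (τ g') γ h g') with h1 | h1
    · exact absurd h1 (hτ g')
    · exact h1
  have hPbne : ∀ g', Pb (τ g') g' ≠ 0 := by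
    intro g'
    obtain ⟨β, hβ⟩ := colPb_ne g'
    by_cases h : β = τ g'
    · rwa [h] at hβ
    · exact absurd (hQsupp g' β h) hβ
  have hPsupp : ∀ g' α, α ≠ τ g' → Pa α g' = 0 := by
    intro g' α h
    rcases mul_eq_zero.1 (M1ab α (τ g') (Ne.symm h) g') with h1 | h1
    · exact h1
    · exact absurd h1 (hPbne g')
  have τinj : Function.Injective τ := by
    intro g₁ g₂ h
    by_contra hne12
    have hv0 : ∀ γ, ∑ g', Pa γ g' *
        (Pa (τ g₁) g₂ * (if g' = g₁ then 1 else 0)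
          - Pa (τ g₁) g₁ * (if g' = g₂ then 1 else 0)) = 0 := by
      intro γ
      have hsum : ∑ g', Pa γ g' *
          (Pa (τ g₁) g₂ * (if g' = g₁ then 1 else 0)
            - Pa (τ g₁) g₁ * (if g' = g₂ then 1 else 0))
          = Pa (τ g₁) g₂ * Pa γ g₁ - Pa (τ g₁) g₁ * Pa γ g₂ := by
        simp only [mul_sub, mul_ite, mul_one, mul_zero, Finset.sum_sub_distrib,
          Finset.sum_ite_eq', Finset.mem_univ, if_true]
        ring
      rw [hsum]
      by_cases hγ : γ = τ g₁
      · subst hγ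
        rw [h]
        ring
      · rw [hPsupp g₁ γ hγ, hPsupp g₂ γ (by rw [← h]; exact hγ)]
        ring
    have hval := hPainj _ hv0 g₁
    simp only [if_pos rfl, if_neg hne12, mul_one, mul_zero, sub_zero, if_true] at hval
    have : Pa (τ g₂) g₂ ≠ 0 := hτ g₂
    rw [← h] at this
    exact this hval
  have τbij : Function.Bijective τ := Finite.injective_iff_bijective.1 τinj
  set e : Fin G ≃ Fin G := Equiv.ofBijective τ τbij with he
  have he_app : ∀ g', e g' = τ g' := fun g' => rfl
  -- column sums are one
  have colsum : ∀ (s : Fin d) (Ps : Fin G → Fin G → ℝ),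
      (∀ g' t, η' g' s t = ∑ α, Ps α g' * η α s t) → ∀ g', ∑ α, Ps α g' = 1 := by
    intro s Ps hPs g'
    have h1 : ∫ t, η' g' s t = ∫ t, ∑ α, Ps α g' * η α s t := by
      refine MeasureTheory.integral_congr_ae (Filter.Eventually.of_forall (fun t => hPs g' t))
    rw [hI' g' s] at h1
    rw [MeasureTheory.integral_finset_sum _ (fun α _ => (hint α s).const_mul _)] at h1
    rw [Finset.sum_congr rfl (fun α _ => by
      rw [MeasureTheory.integral_const_mul, hI α s, mul_one])] at h1
    exact h1.symm
  have hPaτ : ∀ g', Pa (τ g') g' = 1 := by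
    intro g'
    rw [← colsum a Pa hPa g']
    exact (Finset.sum_eq_single (τ g') (fun β _ hb => hPsupp g' β hb) (by simp)).symm
  have hPbτ : ∀ g', Pb (τ g') g' = 1 := by
    intro g'
    rw [← colsum b Pb hPb g']
    exact (Finset.sum_eq_single (τ g') (fun β _ hb => hQsupp g' β hb) (by simp)).symm
  have hPcτ : ∀ g', Pc (τ g') g' = 1 := by
    intro g'
    rw [← colsum c Pc hPc g']
    exact (Finset.sum_eq_single (τ g') (fun β _ hb => hRsupp g' β hb) (by simp)).symm
  -- matched densities at a, b, c
  have ηa_match : ∀ g' t, η' g' a t = η (τ g') a t := by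
    intro g' t
    rw [hPa g' t,
      Finset.sum_eq_single (τ g') (fun β _ hb => by rw [hPsupp g' β hb, zero_mul]) (by simp),
      hPaτ, one_mul]
  have ηb_match : ∀ g' t, η' g' b t = η (τ g') b t := by
    intro g' t
    rw [hPb g' t,
      Finset.sum_eq_single (τ g') (fun β _ hb => by rw [hQsupp g' β hb, zero_mul]) (by simp),
      hPbτ, one_mul]
  have ηc_match : ∀ g' t, η' g' c t = η (τ g') c t := by
    intro g' t
    rw [hPc g' t,
      Finset.sum_eq_single (τ g') (fun β _ hb => by rw [hRsupp g' β hb, zero_mul]) (by simp),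
      hPcτ, one_mul]
  -- matched proportions
  have π_match : ∀ g', π' g' = π (τ g') := by
    intro g'
    have hk := key (τ g') (τ g') (τ g')
    rw [if_pos rfl, if_pos rfl] at hk
    rw [Finset.sum_eq_single g' (fun g₂' _ hg₂ => by
      rw [hPsupp g₂' (τ g') (fun hh => hg₂ (τinj hh.symm))]  -- careful direction
      ring) (by simp)] at hk
    rw [hPaτ, hPbτ, hPcτ] at hk
    simpa using hk
  -- all coordinates
  have η_match : ∀ g' j, η' g' j = η (τ g') j := by
    intro g' j
    by_cases hja : j = a
    · subst hja; exact funext (fun t => ηa_match g' t)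
    by_cases hjb : j = b
    · subst hjb; exact funext (fun t => ηb_match g' t)
    by_cases hjc : j = c
    · subst hjc; exact funext (fun t => ηc_match g' t)
    have hjJ : j ∉ J := by rw [hJabc]; simp [hja, hjb, hjc]
    have H4 : ∀ x y z t, ∑ g, π g * (η g a x * η g b y * η g c z * η g j t)
        = ∑ g₂', π' g₂' * (η' g₂' a x * η' g₂' b y * η' g₂' c z * η' g₂' j t) := by
      intro x y z t
      have lhs : ∀ {m : ℕ} (θ : Fin m → Fin d → ℝ → ℝ) (g : Fin m),
          ∏ j' ∈ insert j J, θ g j' (Function.update (ξ x y z) j t j')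
          = θ g a x * θ g b y * θ g c z * θ g j t := by
        intro m θ g
        rw [Finset.prod_insert hjJ, Function.update_self]
        rw [Finset.prod_congr rfl (fun j' hj' => by
          rw [Function.update_of_ne (by rintro rfl; exact hjJ hj')])]
        rw [prodJ θ g, hξa, hξb, hξc]
        ring
      calc ∑ g, π g * (η g a x * η g b y * η g c z * η g j t)
          = ∑ g, π g * ∏ j' ∈ insert j J, η g j' (Function.update (ξ x y z) j t j') := by
            refine Finset.sum_congr rfl (fun g _ => by rw [lhs η g])
        _ = ∑ g₂', π' g₂' * ∏ j' ∈ insert j J, η' g₂' j' (Function.update (ξ x y z) j t j') :=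
            hm (insert j J) _
        _ = ∑ g₂', π' g₂' * (η' g₂' a x * η' g₂' b y * η' g₂' c z * η' g₂' j t) := by
            refine Finset.sum_congr rfl (fun g₂' _ => by rw [lhs η' g₂'])
    funext t
    have hz : ∀ x y z, ∑ g, (π g * (η g b y * η g c z) * (η g j t - η' (e.symm g) j t)) * η g a x = 0 := by
      intro x y z
      have h4 := H4 x y z t
      have hrhs : ∑ g₂', π' g₂' * (η' g₂' a x * η' g₂' b y * η' g₂' c z * η' g₂' j t)
          = ∑ g, π g * (η g a x * η g b y * η g c z * η' (e.symm g) j t) := by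
        have hterm : ∀ g₂', π' g₂' * (η' g₂' a x * η' g₂' b y * η' g₂' c z * η' g₂' j t)
            = (fun g => π g * (η g a x * η g b y * η g c z * η' (e.symm g) j t)) (e g₂') := by
          intro g₂'
          simp only [Equiv.symm_apply_apply]
          rw [he_app g₂', π_match g₂', ηa_match g₂' x, ηb_match g₂' y, ηc_match g₂' z]
        calc ∑ g₂', π' g₂' * (η' g₂' a x * η' g₂' b y * η' g₂' c z * η' g₂' j t)
            = ∑ g₂', (fun g => π g * (η g a x * η g b y * η g c z * η' (e.symm g) j t)) (e g₂') :=
              Finset.sum_congr rfl (fun g₂' _ => hterm g₂')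
          _ = ∑ g, π g * (η g a x * η g b y * η g c z * η' (e.symm g) j t) := by
              simpa using Equiv.sum_comp e
                (fun g => π g * (η g a x * η g b y * η g c z * η' (e.symm g) j t))
      rw [hrhs] at h4
      have : ∑ g, (π g * (η g b y * η g c z) * (η g j t - η' (e.symm g) j t)) * η g a x
          = ∑ g, π g * (η g a x * η g b y * η g c z * η g j t)
            - ∑ g, π g * (η g a x * η g b y * η g c z * η' (e.symm g) j t) := by
        rw [← Finset.sum_sub_distrib]
        refine Finset.sum_congr rfl (fun g _ => by ring)
      rw [this, h4, sub_self]
    have hcoef : ∀ y z g, π g * (η g b y * η g c z) * (η g j t - η' (e.symm g) j t) = 0 := by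
      intro y z g
      refine Fintype.linearIndependent_iff.1 hLIa
        (fun g => π g * (η g b y * η g c z) * (η g j t - η' (e.symm g) j t)) ?_ g
      funext x
      simpa [Finset.sum_apply, smul_eq_mul] using hz x y z
    have hdiff : η (τ g') j t - η' (e.symm (τ g')) j t = 0 := by
      have h1 := hcoef (Classical.choose (hne (τ g') b)) (Classical.choose (hne (τ g') c)) (τ g')
      have hb0 := Classical.choose_spec (hne (τ g') b)
      have hc0 := Classical.choose_spec (hne (τ g') c)
      rcases mul_eq_zero.1 h1 with h2 | h2
      · rcases mul_eq_zero.1 h2 with h3 | h3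
        · exact absurd h3 (hπne (τ g'))
        · rcases mul_eq_zero.1 h3 with h4 | h4
          · exact absurd h4 hb0
          · exact absurd h4 hc0
      · exact h2
    have : e.symm (τ g') = g' := by
      rw [← he_app g']
      exact e.symm_apply_apply g'
    rw [this] at hdiff
    linarith [hdiff]
  -- assemble
  refine ⟨e.symm, fun g => ?_, fun g j => ?_⟩
  · rw [π_match (e.symm g), ← he_app (e.symm g), e.apply_symm_apply]
  · rw [η_match (e.symm g) j, ← he_app (e.symm g), e.apply_symm_apply]
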